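/- For every (x,y) in the open unit disk, the first fundamental form coefficients of Φ satisfy E·G − F² = (1 + g(x,y))⁴/(1 − x² − y²). In particular, if g(x,y) ≠ −1 for all (x,y) ∈ U, then E·G − F² > 0 on U, so Φ is an immersion of U onto a spacelike surface contained in the light cone Λ³ ⊂ ℝ⁴₁. -/

import Mathlib

noncomputable section

/-- The Minkowski scalar product `⟨u,v⟩ = −u₀v₀ + u₁v₁ + u₂v₂ + u₃v₃` on `ℝ⁴₁`. -/
def mink (u v : Fin 4 → ℝ) : ℝ :=
  -(u 0 * v 0) + u 1 * v 1 + u 2 * v 2 + u 3 * v 3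

/-- Partial derivative in the `x`-direction. -/
def pdx {E : Type*} [NormedAddCommGroup E] [NormedSpace ℝ E]
    (f : ℝ × ℝ → E) (p : ℝ × ℝ) : E := fderiv ℝ f p (1, 0)

/-- Partial derivative in the `y`-direction. -/
def pdy {E : Type*} [NormedAddCommGroup E] [NormedSpace ℝ E]
    (f : ℝ × ℝ → E) (p : ℝ × ℝ) : E := fderiv ℝ f p (0, 1)

/-- First fundamental form coefficient `E = ⟨Φ_x, Φ_x⟩`. -/
def EcoefP (Φ : ℝ × ℝ → (Fin 4 → ℝ)) (p : ℝ × ℝ) : ℝ := mink (pdx Φ p) (pdx Φ p)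

/-- First fundamental form coefficient `F = ⟨Φ_x, Φ_y⟩`. -/
def FcoefP (Φ : ℝ × ℝ → (Fin 4 → ℝ)) (p : ℝ × ℝ) : ℝ := mink (pdx Φ p) (pdy Φ p)

/-- First fundamental form coefficient `G = ⟨Φ_y, Φ_y⟩`. -/
def GcoefP (Φ : ℝ × ℝ → (Fin 4 → ℝ)) (p : ℝ × ℝ) : ℝ := mink (pdy Φ p) (pdy Φ p)

/-- The parametrization `Φ(x,y) = (1 + g(x,y))·(1, x, y, √(1 − x² − y²))` of a surface
in the light cone `Λ³ ⊂ ℝ⁴₁`. -/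
def PhiCone (g : ℝ × ℝ → ℝ) (p : ℝ × ℝ) : Fin 4 → ℝ :=
  (1 + g p) • ![1, p.1, p.2, Real.sqrt (1 - p.1 ^ 2 - p.2 ^ 2)]

open ContinuousLinearMap in
lemma phiDeriv17 (g : ℝ × ℝ → ℝ) (p : ℝ × ℝ) (hgd : DifferentiableAt ℝ g p)
    (hp : p.1 ^ 2 + p.2 ^ 2 < 1) :
    HasFDerivAt (PhiCone g)
      ((1 + g p) • ContinuousLinearMap.pi
          ![0, fst ℝ ℝ ℝ, snd ℝ ℝ ℝ,
            (1 / (2 * Real.sqrt (1 - p.1 ^ 2 - p.2 ^ 2))) •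
              (((0 : ℝ × ℝ →L[ℝ] ℝ) - (2 * p.1) • fst ℝ ℝ ℝ) - (2 * p.2) • snd ℝ ℝ ℝ)]
        + (fderiv ℝ g p).smulRight ![1, p.1, p.2, Real.sqrt (1 - p.1 ^ 2 - p.2 ^ 2)]) p := by
  have hs : (0:ℝ) < 1 - p.1 ^ 2 - p.2 ^ 2 := by linarith
  have hsub : HasFDerivAt (fun q : ℝ × ℝ => 1 - q.1 ^ 2 - q.2 ^ 2)
      (((0 : ℝ × ℝ →L[ℝ] ℝ) - (2 * p.1) • fst ℝ ℝ ℝ) - (2 * p.2) • snd ℝ ℝ ℝ) p := by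
    have h1 : HasFDerivAt (fun q : ℝ × ℝ => q.1 ^ 2) ((2 * p.1) • fst ℝ ℝ ℝ) p := by
      have := (hasFDerivAt_fst (p := p) (𝕜 := ℝ)).mul (hasFDerivAt_fst (p := p) (𝕜 := ℝ))
      have e1 : (fun q : ℝ × ℝ => q.1 ^ 2) = Prod.fst * Prod.fst := by funext q; simp [sq]
      have e2 : (2 * p.1) • fst ℝ ℝ ℝ = p.1 • fst ℝ ℝ ℝ + p.1 • fst ℝ ℝ ℝ := by
        rw [two_mul, add_smul]
      rw [e1, e2]; exact this
    have h2 : HasFDerivAt (fun q : ℝ × ℝ => q.2 ^ 2) ((2 * p.2) • snd ℝ ℝ ℝ) p := by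
      have := (hasFDerivAt_snd (p := p) (𝕜 := ℝ)).mul (hasFDerivAt_snd (p := p) (𝕜 := ℝ))
      have e1 : (fun q : ℝ × ℝ => q.2 ^ 2) = Prod.snd * Prod.snd := by funext q; simp [sq]
      have e2 : (2 * p.2) • snd ℝ ℝ ℝ = p.2 • snd ℝ ℝ ℝ + p.2 • snd ℝ ℝ ℝ := by
        rw [two_mul, add_smul]
      rw [e1, e2]; exact this
    exact ((hasFDerivAt_const (1:ℝ) p).sub h1).sub h2
  have hsqrt : HasFDerivAt (fun q : ℝ × ℝ => Real.sqrt (1 - q.1 ^ 2 - q.2 ^ 2))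
      ((1 / (2 * Real.sqrt (1 - p.1 ^ 2 - p.2 ^ 2))) •
        (((0 : ℝ × ℝ →L[ℝ] ℝ) - (2 * p.1) • fst ℝ ℝ ℝ) - (2 * p.2) • snd ℝ ℝ ℝ)) p :=
    (Real.hasDerivAt_sqrt hs.ne').comp_hasFDerivAt p hsub
  have hV : HasFDerivAt
      (fun q : ℝ × ℝ => (![1, q.1, q.2, Real.sqrt (1 - q.1 ^ 2 - q.2 ^ 2)] : Fin 4 → ℝ))
      (ContinuousLinearMap.pi
        ![0, fst ℝ ℝ ℝ, snd ℝ ℝ ℝ,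
          (1 / (2 * Real.sqrt (1 - p.1 ^ 2 - p.2 ^ 2))) •
            (((0 : ℝ × ℝ →L[ℝ] ℝ) - (2 * p.1) • fst ℝ ℝ ℝ) - (2 * p.2) • snd ℝ ℝ ℝ)]) p := by
    rw [hasFDerivAt_pi']
    intro i
    fin_cases i
    · simpa using hasFDerivAt_const (1:ℝ) p
    · simpa using hasFDerivAt_fst (p := p) (𝕜 := ℝ)
    · simpa using hasFDerivAt_snd (p := p) (𝕜 := ℝ)
    · simpa using hsqrt
  have hc : HasFDerivAt (fun q => 1 + g q) (fderiv ℝ g p) p := by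
    simpa using hgd.hasFDerivAt
  exact hc.smul hV

lemma pdx_phi17 (g : ℝ × ℝ → ℝ) (p : ℝ × ℝ) (hgd : DifferentiableAt ℝ g p)
    (hp : p.1 ^ 2 + p.2 ^ 2 < 1) :
    pdx (PhiCone g) p =
      ![fderiv ℝ g p (1, 0),
        fderiv ℝ g p (1, 0) * p.1 + (1 + g p),
        fderiv ℝ g p (1, 0) * p.2,
        fderiv ℝ g p (1, 0) * Real.sqrt (1 - p.1 ^ 2 - p.2 ^ 2)
          - (1 + g p) * (p.1 / Real.sqrt (1 - p.1 ^ 2 - p.2 ^ 2))] := by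
  have hs : (0:ℝ) < 1 - p.1 ^ 2 - p.2 ^ 2 := by linarith
  have hr : (0:ℝ) < Real.sqrt (1 - p.1 ^ 2 - p.2 ^ 2) := Real.sqrt_pos.mpr hs
  rw [pdx, (phiDeriv17 g p hgd hp).fderiv]
  funext i
  fin_cases i <;>
    · simp [ContinuousLinearMap.pi_apply, mul_comm]
      try field_simp
      try ring

lemma pdy_phi17 (g : ℝ × ℝ → ℝ) (p : ℝ × ℝ) (hgd : DifferentiableAt ℝ g p)
    (hp : p.1 ^ 2 + p.2 ^ 2 < 1) :
    pdy (PhiCone g) p =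
      ![fderiv ℝ g p (0, 1),
        fderiv ℝ g p (0, 1) * p.1,
        fderiv ℝ g p (0, 1) * p.2 + (1 + g p),
        fderiv ℝ g p (0, 1) * Real.sqrt (1 - p.1 ^ 2 - p.2 ^ 2)
          - (1 + g p) * (p.2 / Real.sqrt (1 - p.1 ^ 2 - p.2 ^ 2))] := by
  have hs : (0:ℝ) < 1 - p.1 ^ 2 - p.2 ^ 2 := by linarith
  have hr : (0:ℝ) < Real.sqrt (1 - p.1 ^ 2 - p.2 ^ 2) := Real.sqrt_pos.mpr hs
  rw [pdy, (phiDeriv17 g p hgd hp).fderiv]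
  funext i
  fin_cases i <;>
    · simp [ContinuousLinearMap.pi_apply, mul_comm]
      try field_simp
      try ring

lemma keyalg17 (x y r c1 c2 b : ℝ) (hr : r ≠ 0) (hr2 : r ^ 2 = 1 - x ^ 2 - y ^ 2) :
    mink ![c1, c1 * x + b, c1 * y, c1 * r - b * (x / r)]
        ![c1, c1 * x + b, c1 * y, c1 * r - b * (x / r)] *
      mink ![c2, c2 * x, c2 * y + b, c2 * r - b * (y / r)]
        ![c2, c2 * x, c2 * y + b, c2 * r - b * (y / r)] -
      (mink ![c1, c1 * x + b, c1 * y, c1 * r - b * (x / r)]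
        ![c2, c2 * x, c2 * y + b, c2 * r - b * (y / r)]) ^ 2 =
    b ^ 4 / (1 - x ^ 2 - y ^ 2) := by
  have hs : (1 : ℝ) - x ^ 2 - y ^ 2 ≠ 0 := by rw [← hr2]; exact pow_ne_zero 2 hr
  simp only [mink, Matrix.cons_val_zero, Matrix.cons_val_one, Matrix.head_cons,
    Matrix.cons_val_two, Matrix.tail_cons, Matrix.cons_val_three]
  obtain ⟨s, hsx⟩ : ∃ s, x / r = s := ⟨_, rfl⟩
  obtain ⟨t, hty⟩ : ∃ t, y / r = t := ⟨_, rfl⟩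
  rw [hsx, hty]
  have hx : x = s * r := by rw [← hsx]; field_simp
  have hy : y = t * r := by rw [← hty]; field_simp
  subst hx hy
  have hQ : r ^ 2 * (1 + s ^ 2 + t ^ 2) = 1 := by linear_combination hr2
  rw [eq_div_iff hs]
  linear_combination (b ^ 2 * (c1 ^ 2 * (1 + t ^ 2) + c2 ^ 2 * (1 + s ^ 2) - 2 * c1 * c2 * s * t)
    * (1 - (s * r) ^ 2 - (t * r) ^ 2) - b ^ 4 * (s ^ 2 + t ^ 2)) * hQ

lemma main17 (g : ℝ × ℝ → ℝ) (p : ℝ × ℝ) (hgd : DifferentiableAt ℝ g p)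
    (hp : p.1 ^ 2 + p.2 ^ 2 < 1) :
    EcoefP (PhiCone g) p * GcoefP (PhiCone g) p - (FcoefP (PhiCone g) p) ^ 2 =
      (1 + g p) ^ 4 / (1 - p.1 ^ 2 - p.2 ^ 2) := by
  have hs : (0:ℝ) < 1 - p.1 ^ 2 - p.2 ^ 2 := by linarith
  have hr : (0:ℝ) < Real.sqrt (1 - p.1 ^ 2 - p.2 ^ 2) := Real.sqrt_pos.mpr hs
  have hr2 : Real.sqrt (1 - p.1 ^ 2 - p.2 ^ 2) ^ 2 = 1 - p.1 ^ 2 - p.2 ^ 2 :=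
    Real.sq_sqrt hs.le
  rw [EcoefP, FcoefP, GcoefP, pdx_phi17 g p hgd hp, pdy_phi17 g p hgd hp]
  exact keyalg17 p.1 p.2 _ (fderiv ℝ g p (1, 0)) (fderiv ℝ g p (0, 1)) (1 + g p) hr.ne' hr2

theorem stmt17 (g : ℝ × ℝ → ℝ)
    (hg : ContDiffOn ℝ (⊤ : ℕ∞) g {p : ℝ × ℝ | p.1 ^ 2 + p.2 ^ 2 < 1}) :
    (∀ p : ℝ × ℝ, p.1 ^ 2 + p.2 ^ 2 < 1 →
      EcoefP (PhiCone g) p * GcoefP (PhiCone g) p - (FcoefP (PhiCone g) p) ^ 2 =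
        (1 + g p) ^ 4 / (1 - p.1 ^ 2 - p.2 ^ 2)) ∧
    ((∀ p : ℝ × ℝ, p.1 ^ 2 + p.2 ^ 2 < 1 → g p ≠ -1) →
      ∀ p : ℝ × ℝ, p.1 ^ 2 + p.2 ^ 2 < 1 →
        (0 < EcoefP (PhiCone g) p * GcoefP (PhiCone g) p - (FcoefP (PhiCone g) p) ^ 2 ∧
         LinearIndependent ℝ ![pdx (PhiCone g) p, pdy (PhiCone g) p] ∧
         mink (PhiCone g p) (PhiCone g p) = 0 ∧ PhiCone g p ≠ 0)) := by
  have hU : IsOpen {p : ℝ × ℝ | p.1 ^ 2 + p.2 ^ 2 < 1} :=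
    isOpen_lt (by fun_prop) continuous_const
  have hgd : ∀ p : ℝ × ℝ, p.1 ^ 2 + p.2 ^ 2 < 1 → DifferentiableAt ℝ g p := fun p hp =>
    ((hg p hp).contDiffAt (hU.mem_nhds hp)).differentiableAt (by simp)
  constructor
  · exact fun p hp => main17 g p (hgd p hp) hp
  · intro hne p hp
    have hs : (0:ℝ) < 1 - p.1 ^ 2 - p.2 ^ 2 := by linarith
    have hb : (1 : ℝ) + g p ≠ 0 := by
      intro h; exact hne p hp (by linarith)
    have hb4 : (0:ℝ) < (1 + g p) ^ 4 :=
      lt_of_le_of_ne (by positivity) (Ne.symm (pow_ne_zero 4 hb))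
    have hdet : 0 < EcoefP (PhiCone g) p * GcoefP (PhiCone g) p - (FcoefP (PhiCone g) p) ^ 2 := by
      rw [main17 g p (hgd p hp) hp]
      exact div_pos hb4 hs
    refine ⟨hdet, ?_, ?_, ?_⟩
    · rw [LinearIndependent.pair_iff]
      intro s t hst
      set u := pdx (PhiCone g) p with hu
      set v := pdy (PhiCone g) p with hv
      have h1 : s * mink u u + t * mink u v = 0 := by
        have h := congrArg (fun w => mink w u) hst
        simp only [mink, Pi.add_apply, Pi.smul_apply, smul_eq_mul, Pi.zero_apply] at h
        simp only [mink]
        linear_combination h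
      have h2 : s * mink u v + t * mink v v = 0 := by
        have h := congrArg (fun w => mink w v) hst
        simp only [mink, Pi.add_apply, Pi.smul_apply, smul_eq_mul, Pi.zero_apply] at h
        simp only [mink]
        linear_combination h
      have hD : mink u u * mink v v - (mink u v) ^ 2 ≠ 0 := by
        have : EcoefP (PhiCone g) p = mink u u := rfl
        exact hdet.ne'
      constructor
      · have hs0 : s * (mink u u * mink v v - (mink u v) ^ 2) = 0 := by
          linear_combination mink v v * h1 - mink u v * h2
        exact (mul_eq_zero.mp hs0).resolve_right hD
      · have ht0 : t * (mink u u * mink v v - (mink u v) ^ 2) = 0 := by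
          linear_combination mink u u * h2 - mink u v * h1
        exact (mul_eq_zero.mp ht0).resolve_right hD
    · have hr2 : Real.sqrt (1 - p.1 ^ 2 - p.2 ^ 2) ^ 2 = 1 - p.1 ^ 2 - p.2 ^ 2 :=
        Real.sq_sqrt hs.le
      simp only [mink, PhiCone, Pi.smul_apply, Matrix.cons_val_zero, Matrix.cons_val_one,
        Matrix.head_cons, Matrix.cons_val_two, Matrix.tail_cons, Matrix.cons_val_three,
        smul_eq_mul]
      linear_combination (1 + g p) ^ 2 * hr2
    · intro h
      have h0 := congrFun h 0
      simp only [PhiCone, Pi.smul_apply, Matrix.cons_val_zero, smul_eq_mul, mul_one,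
        Pi.zero_apply] at h0
      exact hb h0
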